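/- arXiv:1906.04420 — 7 statements merged into one kernel-verified Lean document; each statement's English description precedes it below -/
import Mathlib

section
/- Let U, V and W be normed vector spaces over 𝕜 ∈ {ℝ, ℂ} and let n ∈ ℕ, n ≥ 1. Let λ ∈ B^n(V,W), and let a₁, …, aₙ : U → V be compact continuous linear operators. Define ν : U × ⋯ × U → W by ν(u₁, …, uₙ) := λ(a₁u₁, …, aₙuₙ) for all u₁, …, uₙ ∈ U. Then ν ∈ K^n(U,W). -/
/-- The spaces `K^n(U,W)` of compact `n`-multilinear maps, defined inductively:
`K^1(U,W)` is the set of compact operators in `B(U,W)`; for `n ≥ 2`, a continuous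
`n`-multilinear map lies in `K^n(U,W)` iff the curried map `u ↦ λ(u,·,…,·)` takes values
in `K^{n-1}(U,W)` and is a compact operator from `U` into `K^{n-1}(U,W)` (with the subspace
topology inherited from the norm of `B^{n-1}(U,W)`). -/
def KMultilinear (𝕜 V W : Type*) [RCLike 𝕜]
    [NormedAddCommGroup V] [NormedSpace 𝕜 V]
    [NormedAddCommGroup W] [NormedSpace 𝕜 W] :
    (n : ℕ) → Set (ContinuousMultilinearMap 𝕜 (fun _ : Fin n => V) W)
  | 0 => Set.univ
  | 1 => {f | IsCompactOperator fun v : V => f fun _ => v}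
  | (n + 2) => {f | ∃ hf : ∀ v : V, f.curryLeft v ∈ KMultilinear 𝕜 V W (n + 1),
      IsCompactOperator fun v : V => (⟨f.curryLeft v, hf v⟩ : KMultilinear 𝕜 V W (n + 1))}

/-! Induct on `n`, peeling off the first argument. Currying commutes with composition:
`ν(u, ·) = λ(a₁ u, ·) ∘ (a₂, …, aₙ)`, so the curried map of `ν` is the compact operator `a₁`
followed by the continuous map `v ↦ λ(v, ·) ∘ (a₂, …, aₙ)`, which by induction takes values in
`K^{n-1}(U,W)`; a compact operator followed by a continuous map is compact. -/

theorem ContinuousMultilinearMap.curryLeft_compContinuousLinearMap {𝕜 W : Type*} {n : ℕ}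
    {E F : Fin (n + 1) → Type*} [NontriviallyNormedField 𝕜]
    [∀ i, NormedAddCommGroup (E i)] [∀ i, NormedSpace 𝕜 (E i)]
    [∀ i, NormedAddCommGroup (F i)] [∀ i, NormedSpace 𝕜 (F i)]
    [NormedAddCommGroup W] [NormedSpace 𝕜 W]
    (l : ContinuousMultilinearMap 𝕜 F W) (a : ∀ i, E i →L[𝕜] F i) (u : E 0) :
    (l.compContinuousLinearMap a).curryLeft u =
      (l.curryLeft (a 0 u)).compContinuousLinearMap (fun i => a i.succ) := by
  ext m
  simp only [ContinuousMultilinearMap.curryLeft_apply,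
    ContinuousMultilinearMap.compContinuousLinearMap_apply]
  congr 1
  ext i
  refine Fin.cases ?_ (fun _ => ?_) i <;> simp

section

variable {𝕜 U V W : Type*} [RCLike 𝕜]
    [NormedAddCommGroup U] [NormedSpace 𝕜 U]
    [NormedAddCommGroup V] [NormedSpace 𝕜 V]
    [NormedAddCommGroup W] [NormedSpace 𝕜 W]

theorem compContinuousLinearMap_mem_KMultilinear_one
    (l : ContinuousMultilinearMap 𝕜 (fun _ : Fin 1 => V) W) (a : Fin 1 → U →L[𝕜] V)
    (ha : IsCompactOperator (a 0)) :
    l.compContinuousLinearMap a ∈ KMultilinear 𝕜 U W 1 := by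
  have hcomp : (fun u : U => l.compContinuousLinearMap a fun _ => u) =
      (fun v : V => l fun _ => v) ∘ a 0 := by
    funext u
    simp only [ContinuousMultilinearMap.compContinuousLinearMap_apply, Function.comp_apply,
      Fin.fin_one_eq_zero]
  change IsCompactOperator fun u : U => l.compContinuousLinearMap a fun _ => u
  rw [hcomp]
  exact ha.continuous_comp (l.cont.comp (continuous_pi fun _ => continuous_id))

theorem mem_KMultilinear_of_curryLeft_eq_comp {X : Type*} [TopologicalSpace X] {n : ℕ}
    (f : ContinuousMultilinearMap 𝕜 (fun _ : Fin (n + 2) => U) W) {T : U → X}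
    (hT : IsCompactOperator T) (g : X → ContinuousMultilinearMap 𝕜 (fun _ : Fin (n + 1) => U) W)
    (hg : Continuous g) (hgK : ∀ x, g x ∈ KMultilinear 𝕜 U W (n + 1))
    (hfg : ∀ u, f.curryLeft u = g (T u)) :
    f ∈ KMultilinear 𝕜 U W (n + 2) := by
  refine ⟨fun u => hfg u ▸ hgK (T u), ?_⟩
  have hcomp : (fun u => (⟨f.curryLeft u, hfg u ▸ hgK (T u)⟩ : KMultilinear 𝕜 U W (n + 1))) =
      (fun x => ⟨g x, hgK x⟩) ∘ T :=
    funext fun u => Subtype.ext (hfg u)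
  exact hcomp ▸ hT.continuous_comp (hg.subtype_mk hgK)

end

theorem compContinuousLinearMap_mem_KMultilinear_general
    {𝕜 U V W : Type*} [RCLike 𝕜]
    [NormedAddCommGroup U] [NormedSpace 𝕜 U]
    [NormedAddCommGroup V] [NormedSpace 𝕜 V]
    [NormedAddCommGroup W] [NormedSpace 𝕜 W]
    (n : ℕ)
    (l : ContinuousMultilinearMap 𝕜 (fun _ : Fin n => V) W)
    (a : Fin n → (U →L[𝕜] V)) (ha : ∀ i, IsCompactOperator (a i)) :
    l.compContinuousLinearMap a ∈ KMultilinear 𝕜 U W n := by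
  induction n using Nat.twoStepInduction with
  | zero => trivial
  | one => exact compContinuousLinearMap_mem_KMultilinear_one l a (ha 0)
  | more n _ ih =>
    refine mem_KMultilinear_of_curryLeft_eq_comp _ (ha 0)
      (fun v => (l.curryLeft v).compContinuousLinearMap (Fin.tail a)) ?_
      (fun v => ih _ _ fun i => ha i.succ)
      (l.curryLeft_compContinuousLinearMap a)
    exact ((ContinuousMultilinearMap.compContinuousLinearMapL (Fin.tail a)).comp
      l.curryLeft).continuous

/-- If `λ ∈ B^n(V,W)` and `a₁, …, aₙ : U → V` are compact continuous
linear operators, then the `n`-multilinear map `ν(u₁,…,uₙ) := λ(a₁u₁,…,aₙuₙ)` lies in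
`K^n(U,W)`. -/
theorem compContinuousLinearMap_mem_KMultilinear
    {𝕜 U V W : Type*} [RCLike 𝕜]
    [NormedAddCommGroup U] [NormedSpace 𝕜 U]
    [NormedAddCommGroup V] [NormedSpace 𝕜 V]
    [NormedAddCommGroup W] [NormedSpace 𝕜 W]
    (n : ℕ) (hn : 1 ≤ n)
    (l : ContinuousMultilinearMap 𝕜 (fun _ : Fin n => V) W)
    (a : Fin n → (U →L[𝕜] V)) (ha : ∀ i, IsCompactOperator (a i)) :
    l.compContinuousLinearMap a ∈ KMultilinear 𝕜 U W n :=
  compContinuousLinearMap_mem_KMultilinear_general n l a ha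
end

section
/- Let U, V and W be normed vector spaces over 𝕜 ∈ {ℝ, ℂ}, let n ∈ ℕ with n ≥ 1, let f : V → W be n times (Fréchet) differentiable, and let j : U → V be a compact continuous linear map. Then f ∘ j : U → W is n times compactly differentiable: for every u ∈ U, its n-th Fréchet derivative (f ∘ j)^{(n)}(u), which is the continuous n-multilinear map (h₁,…,hₙ) ↦ f^{(n)}(j(u))(j(h₁),…,j(hₙ)), belongs to K^n(U,W). -/
section aux

variable {𝕜 U V W : Type*} [RCLike 𝕜]
    [NormedAddCommGroup U] [NormedSpace 𝕜 U]
    [NormedAddCommGroup V] [NormedSpace 𝕜 V]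
    [NormedAddCommGroup W] [NormedSpace 𝕜 W]

lemma curryLeft_compCLM {n : ℕ} (lam : ContinuousMultilinearMap 𝕜 (fun _ : Fin (n + 2) => V) W)
    (j : U →L[𝕜] V) (u : U) :
    (lam.compContinuousLinearMap fun _ => j).curryLeft u
      = (lam.curryLeft (j u)).compContinuousLinearMap (fun _ => j) := by
  ext m
  simp only [ContinuousMultilinearMap.curryLeft_apply,
    ContinuousMultilinearMap.compContinuousLinearMap_apply]
  congr 1
  funext i
  refine Fin.cases ?_ (fun k => ?_) i <;> simp

lemma compCLM_mem_KMultilinear (j : U →L[𝕜] V) (hj : IsCompactOperator j) :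
    ∀ (n : ℕ) (lam : ContinuousMultilinearMap 𝕜 (fun _ : Fin (n + 1) => V) W),
      lam.compContinuousLinearMap (fun _ => j) ∈ KMultilinear 𝕜 U W (n + 1) := by
  intro n
  induction n with
  | zero =>
    intro lam
    show IsCompactOperator fun u : U => (lam.compContinuousLinearMap fun _ => j) fun _ => u
    have : (fun u : U => (lam.compContinuousLinearMap fun _ => j) fun _ => u)
        = (fun v : V => lam fun _ => v) ∘ j := by
      funext u; rfl
    rw [this]
    exact hj.continuous_comp (lam.cont.comp (continuous_pi fun _ => continuous_id))
  | succ n ih =>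
    intro lam
    have hmem : ∀ u : U,
        (lam.compContinuousLinearMap fun _ => j).curryLeft u ∈ KMultilinear 𝕜 U W (n + 1) := by
      intro u
      rw [curryLeft_compCLM]
      exact ih (lam.curryLeft (j u))
    refine ⟨hmem, ?_⟩
    -- the map into the subtype factors as a continuous map after the compact operator `j`
    have hcont : Continuous fun v : V =>
        ((ContinuousMultilinearMap.compContinuousLinearMapL fun _ : Fin (n + 1) => j)
          (lam.curryLeft v)) :=
      (ContinuousMultilinearMap.compContinuousLinearMapL fun _ : Fin (n + 1) => j).continuous.comp
        lam.curryLeft.continuous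
    have hmem' : ∀ v : V,
        ((ContinuousMultilinearMap.compContinuousLinearMapL fun _ : Fin (n + 1) => j)
          (lam.curryLeft v)) ∈ KMultilinear 𝕜 U W (n + 1) := by
      intro v
      rw [ContinuousMultilinearMap.compContinuousLinearMapL_apply]
      exact ih (lam.curryLeft v)
    have key : (fun u : U =>
        (⟨(lam.compContinuousLinearMap fun _ => j).curryLeft u, hmem u⟩ :
          KMultilinear 𝕜 U W (n + 1)))
        = (fun v : V => (⟨_, hmem' v⟩ : KMultilinear 𝕜 U W (n + 1))) ∘ j := by
      funext u
      apply Subtype.ext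
      simp only [Function.comp_apply, ContinuousMultilinearMap.compContinuousLinearMapL_apply]
      exact curryLeft_compCLM lam j u
    rw [key]
    exact hj.continuous_comp (Continuous.subtype_mk hcont _)

lemma iteratedFDeriv_comp_clm (f : V → W) (j : U →L[𝕜] V) :
    ∀ (i : ℕ), (∀ k < i, Differentiable 𝕜 (iteratedFDeriv 𝕜 k f)) → ∀ u : U,
      iteratedFDeriv 𝕜 i (f ∘ j) u
        = (iteratedFDeriv 𝕜 i f (j u)).compContinuousLinearMap (fun _ => j) := by
  intro i
  induction i with
  | zero =>
    intro _ u
    ext m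
    simp [iteratedFDeriv_zero_apply]
  | succ i ih =>
    intro h u
    have hd : Differentiable 𝕜 (iteratedFDeriv 𝕜 i f) := h i (Nat.lt_succ_self i)
    have heq : iteratedFDeriv 𝕜 i (f ∘ j)
        = fun x : U => (ContinuousMultilinearMap.compContinuousLinearMapL fun _ : Fin i => j)
            (iteratedFDeriv 𝕜 i f (j x)) := by
      funext x
      rw [ih (fun k hk => h k (hk.trans (Nat.lt_succ_self i))) x,
        ContinuousMultilinearMap.compContinuousLinearMapL_apply]
    have hder : HasFDerivAt
        (fun x : U => (ContinuousMultilinearMap.compContinuousLinearMapL fun _ : Fin i => j)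
            (iteratedFDeriv 𝕜 i f (j x)))
        (((ContinuousMultilinearMap.compContinuousLinearMapL fun _ : Fin i => j).comp
          (fderiv 𝕜 (iteratedFDeriv 𝕜 i f) (j u))).comp j) u := by
      have := ((ContinuousMultilinearMap.compContinuousLinearMapL
          fun _ : Fin i => j).hasFDerivAt (x := iteratedFDeriv 𝕜 i f (j u))).comp u
        (((hd (j u)).hasFDerivAt).comp u j.hasFDerivAt)
      simpa [Function.comp_def, ContinuousLinearMap.comp_assoc] using this
    ext m
    rw [iteratedFDeriv_succ_apply_left, heq, hder.fderiv]
    simp only [ContinuousLinearMap.coe_comp', Function.comp_apply,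
      ContinuousMultilinearMap.compContinuousLinearMapL_apply,
      ContinuousMultilinearMap.compContinuousLinearMap_apply,
      iteratedFDeriv_succ_apply_left]
    rfl

end aux

/-- If `f : V → W` is `n` times Fréchet differentiable and `j : U → V` is a
compact continuous linear map, then `f ∘ j` is `n` times compactly differentiable: for every
`u`, its `n`-th Fréchet derivative is the continuous `n`-multilinear map
`(h₁,…,hₙ) ↦ f^{(n)}(j u)(j h₁, …, j hₙ)`, and it belongs to `K^n(U,W)`. -/
theorem comp_compact_inclusion_compactly_differentiable
    {𝕜 U V W : Type*} [RCLike 𝕜]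
    [NormedAddCommGroup U] [NormedSpace 𝕜 U]
    [NormedAddCommGroup V] [NormedSpace 𝕜 V]
    [NormedAddCommGroup W] [NormedSpace 𝕜 W]
    (n : ℕ) (hn : 1 ≤ n) (f : V → W)
    (hf : ∀ k < n, Differentiable 𝕜 (iteratedFDeriv 𝕜 k f))
    (j : U →L[𝕜] V) (hj : IsCompactOperator j) :
    ∀ u : U,
      iteratedFDeriv 𝕜 n (f ∘ j) u
          = (iteratedFDeriv 𝕜 n f (j u)).compContinuousLinearMap (fun _ => j) ∧
        iteratedFDeriv 𝕜 n (f ∘ j) u ∈ KMultilinear 𝕜 U W n := by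
  intro u
  have heq := iteratedFDeriv_comp_clm (𝕜 := 𝕜) (U := U) (V := V) (W := W) f j n hf u
  refine ⟨heq, ?_⟩
  obtain ⟨m, rfl⟩ := Nat.exists_eq_add_of_le' hn
  rw [heq]
  exact compCLM_mem_KMultilinear j hj m _
end

section
/- Let V and W be Banach spaces over 𝕜 ∈ {ℝ, ℂ}. Let {e^j}_{j∈ℕ} be a countable subset of the continuous dual V* whose span is dense in V*, and let {f_k}_{k∈ℕ} be a countable subset of W whose span is dense in W. Then the linear span of the rank-one operators e^j ⊗ f_k (where (e^j ⊗ f_k)(v) := e^j(v)·f_k for v ∈ V) is dense, with respect to the operator norm, in the space F(V,W) of finite-rank operators, i.e., of continuous linear operators from V to W whose range is finite-dimensional. -/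
/-!
A finite-rank operator is a finite sum of rank-one operators `φ ⊗ w`. Since `(φ, w) ↦ φ ⊗ w` is
continuous and bilinear, approximating `φ` in the span of the `e j` and `w` in the span of the
`f k` approximates `φ ⊗ w` by elements of the span of the `e j ⊗ f k`.
-/

open Set

theorem Submodule.apply_mem_topologicalClosure_map₂ {R M N P : Type*} [CommSemiring R]
    [AddCommMonoid M] [AddCommMonoid N] [AddCommMonoid P] [Module R M] [Module R N] [Module R P]
    [TopologicalSpace M] [TopologicalSpace N] [TopologicalSpace P]
    [ContinuousAdd P] [ContinuousConstSMul R P]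
    (B : M →ₗ[R] N →ₗ[R] P) (hB : Continuous fun x : M × N => B x.1 x.2)
    {p : Submodule R M} {q : Submodule R N} (hp : Dense (p : Set M)) (hq : Dense (q : Set N))
    (m : M) (n : N) : B m n ∈ (map₂ B p q).topologicalClosure :=
  map_mem_closure₂ (f := fun m n => B m n) hB (hp m) (hq n) fun _ hm _ hn => apply_mem_map₂ B hm hn

theorem ContinuousLinearMap.exists_eq_sum_smulRight_of_finiteDimensional_range
    {𝕜 V W : Type*} [NontriviallyNormedField 𝕜] [CompleteSpace 𝕜]
    [AddCommGroup V] [Module 𝕜 V] [TopologicalSpace V]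
    [AddCommGroup W] [Module 𝕜 W] [TopologicalSpace W] [IsTopologicalAddGroup W]
    [ContinuousSMul 𝕜 W] [T2Space W]
    (T : V →L[𝕜] W) [FiniteDimensional 𝕜 (LinearMap.range (T : V →ₗ[𝕜] W))] :
    ∃ (n : ℕ) (φ : Fin n → V →L[𝕜] 𝕜) (w : Fin n → W), T = ∑ i, (φ i).smulRight (w i) := by
  set R := LinearMap.range (T : V →ₗ[𝕜] W)
  let b := Module.finBasis 𝕜 R
  let T' : V →L[𝕜] R := T.codRestrict R (LinearMap.mem_range_self _)
  refine ⟨_, fun i => LinearMap.toContinuousLinearMap (b.coord i) ∘L T', fun i => b i, ?_⟩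
  ext v
  have hv : ((T' v : R) : W) = ∑ i, b.repr (T' v) i • (b i : W) := by
    conv_lhs => rw [← b.sum_repr (T' v)]
    push_cast
    rfl
  simpa [T'] using hv

theorem span_rankOne_dense_in_finiteRank_general
    {𝕜 V W : Type*} [RCLike 𝕜]
    [NormedAddCommGroup V] [NormedSpace 𝕜 V]
    [NormedAddCommGroup W] [NormedSpace 𝕜 W]
    (e : ℕ → (V →L[𝕜] 𝕜))
    (he : Dense (↑(Submodule.span 𝕜 (Set.range e)) : Set (V →L[𝕜] 𝕜)))
    (f : ℕ → W)
    (hf : Dense (↑(Submodule.span 𝕜 (Set.range f)) : Set W)) :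
    ∀ T : V →L[𝕜] W, FiniteDimensional 𝕜 (LinearMap.range (T : V →ₗ[𝕜] W)) →
      T ∈ closure (↑(Submodule.span 𝕜
        (Set.range fun p : ℕ × ℕ => (e p.1).smulRight (f p.2))) : Set (V →L[𝕜] W)) := by
  intro T hT
  obtain ⟨n, φ, w, rfl⟩ := T.exists_eq_sum_smulRight_of_finiteDimensional_range
  let B := (ContinuousLinearMap.smulRightL 𝕜 V W).toLinearMap₁₂
  have hB : Continuous fun x : (V →L[𝕜] 𝕜) × W => B x.1 x.2 :=
    (ContinuousLinearMap.smulRightL 𝕜 V W).continuous₂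
  have hspan : Submodule.map₂ B (Submodule.span 𝕜 (range e)) (Submodule.span 𝕜 (range f)) =
      Submodule.span 𝕜 (range fun p : ℕ × ℕ => (e p.1).smulRight (f p.2)) := by
    rw [Submodule.map₂_span_span, image2_range]
    rfl
  rw [← hspan]
  exact Submodule.sum_mem _ fun i _ =>
    Submodule.apply_mem_topologicalClosure_map₂ B hB he hf (φ i) (w i)

/-- Let `V`, `W` be Banach spaces, `{e^j}` a countable family in the
continuous dual `V*` with dense span, and `{f_k}` a countable family in `W` with dense span.
Then the span of the rank-one operators `e^j ⊗ f_k : v ↦ e^j(v) • f_k` is dense (in operator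
norm) in the space of finite-rank continuous linear operators from `V` to `W`. -/
theorem span_rankOne_dense_in_finiteRank
    {𝕜 V W : Type*} [RCLike 𝕜]
    [NormedAddCommGroup V] [NormedSpace 𝕜 V] [CompleteSpace V]
    [NormedAddCommGroup W] [NormedSpace 𝕜 W] [CompleteSpace W]
    (e : ℕ → (V →L[𝕜] 𝕜))
    (he : Dense (↑(Submodule.span 𝕜 (Set.range e)) : Set (V →L[𝕜] 𝕜)))
    (f : ℕ → W)
    (hf : Dense (↑(Submodule.span 𝕜 (Set.range f)) : Set W)) :
    ∀ T : V →L[𝕜] W, FiniteDimensional 𝕜 (LinearMap.range (T : V →ₗ[𝕜] W)) →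
      T ∈ closure (↑(Submodule.span 𝕜
        (Set.range fun p : ℕ × ℕ => (e p.1).smulRight (f p.2))) : Set (V →L[𝕜] W)) :=
  span_rankOne_dense_in_finiteRank_general e he f hf
end

section
/- Let μ̃ ≥ 0 and let μ ∈ ℂ with |Re(μ)| > μ̃. Let u : ℝ → ℂ be an infinitely differentiable function such that u and all its derivatives grow at most polynomially, i.e., for every k ∈ ℕ₀ there exist C, r > 0 with |u^{(k)}(t)| ≤ C(1 + |t|^r) for all t ∈ ℝ. Then e^{μ(·)} ⋆ u is infinitely differentiable, and e^{μ(·)} ⋆ u and all its derivatives grow at most polynomially. Moreover, if |u(t)| ≤ C(1 + |t|^n) for all t, then there is a constant C′ > 0 such that |(e^{μ(·)} ⋆ u)(t)| ≤ C′(1 + |t|^n) for all t ∈ ℝ. -/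
open MeasureTheory

/-- The exponential convolution `e^{μ(·)} ⋆ u`: it is
`t ↦ ∫_{−∞}^t e^{μ(t−τ)} u(τ) dτ` when `Re μ < 0` (i.e. `Re μ < −μ̃`), and
`t ↦ ∫_t^{∞} e^{μ(t−τ)} u(τ) dτ` when `Re μ > 0` (i.e. `Re μ > μ̃`). -/
noncomputable def expConv (μ : ℂ) (u : ℝ → ℂ) : ℝ → ℂ :=
  fun t =>
    if μ.re < 0 then ∫ τ in Set.Iic t, Complex.exp (μ * (t - τ)) * u τ
    else ∫ τ in Set.Ici t, Complex.exp (μ * (t - τ)) * u τ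

section ExpConvAux
open Set
open scoped ENNReal NNReal

lemma exp_bound_K {b r : ℝ} (hb : 0 < b) (hr : 0 ≤ r) :
    ∃ K : ℝ, 0 < K ∧ ∀ s : ℝ, 0 ≤ s → s ^ r ≤ K * Real.exp (b * s) := by
  set m := Nat.ceil r with hm
  refine ⟨max 1 (b⁻¹ ^ m * m.factorial), lt_of_lt_of_le one_pos (le_max_left _ _), fun s hs => ?_⟩
  have hexp1 : (1:ℝ) ≤ Real.exp (b * s) := Real.one_le_exp (by positivity)
  rcases le_total s 1 with h1 | h1
  · calc s ^ r ≤ 1 := Real.rpow_le_one hs h1 hr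
      _ ≤ max 1 (b⁻¹ ^ m * m.factorial) * Real.exp (b * s) := by
          nlinarith [le_max_left (1:ℝ) (b⁻¹ ^ m * m.factorial)]
  · have hpow : (b * s) ^ m / m.factorial ≤ Real.exp (b * s) := by
      calc (b * s) ^ m / m.factorial ≤ ∑ i ∈ Finset.range (m + 1), (b * s) ^ i / i.factorial := by
            refine Finset.single_le_sum (f := fun i => (b * s) ^ i / i.factorial) ?_ ?_
            · intro i _; positivity
            · exact Finset.self_mem_range_succ m
        _ ≤ Real.exp (b * s) := Real.sum_le_exp_of_nonneg (by positivity) _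
    have h2 : s ^ r ≤ s ^ (m : ℝ) := Real.rpow_le_rpow_of_exponent_le h1 (Nat.le_ceil r)
    have h3 : s ^ (m : ℝ) = s ^ m := Real.rpow_natCast s m
    have hfac : (0:ℝ) < m.factorial := by positivity
    have h4 : s ^ m ≤ b⁻¹ ^ m * m.factorial * Real.exp (b * s) := by
      have : s ^ m = b⁻¹ ^ m * (b * s) ^ m := by
        rw [mul_pow, ← mul_assoc, ← mul_pow, inv_mul_cancel₀ hb.ne', one_pow, one_mul]
      rw [this]
      have hb' : (0:ℝ) ≤ b⁻¹ ^ m := by positivity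
      calc b⁻¹ ^ m * (b * s) ^ m ≤ b⁻¹ ^ m * (m.factorial * Real.exp (b * s)) := by
            apply mul_le_mul_of_nonneg_left _ hb'
            rw [div_le_iff₀ hfac] at hpow; linarith [hpow]
        _ = b⁻¹ ^ m * m.factorial * Real.exp (b * s) := by ring
    calc s ^ r ≤ s ^ m := h3 ▸ h2
      _ ≤ b⁻¹ ^ m * m.factorial * Real.exp (b * s) := h4
      _ ≤ max 1 (b⁻¹ ^ m * m.factorial) * Real.exp (b * s) := by
          apply mul_le_mul_of_nonneg_right (le_max_right _ _) (Real.exp_pos _).le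

lemma rpow_add_le' {x y r : ℝ} (hx : 0 ≤ x) (hy : 0 ≤ y) (hr : 0 ≤ r) :
    (x + y) ^ r ≤ 2 ^ r * (x ^ r + y ^ r) := by
  have key : ∀ a c : ℝ, 0 ≤ a → 0 ≤ c → a ≤ c → (a + c) ^ r ≤ 2 ^ r * (a ^ r + c ^ r) := by
    intro a c ha hc hac
    have h1 : (a + c) ^ r ≤ (2 * c) ^ r := Real.rpow_le_rpow (by linarith) (by linarith) hr
    have h2 : (2 * c : ℝ) ^ r = 2 ^ r * c ^ r := Real.mul_rpow (by norm_num) hc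
    have h3 : (0:ℝ) ≤ a ^ r := Real.rpow_nonneg ha r
    have h4 : (0:ℝ) ≤ (2:ℝ) ^ r := Real.rpow_nonneg (by norm_num) r
    nlinarith
  rcases le_total x y with h | h
  · exact key x y hx hy h
  · have := key y x hy hx h
    calc (x + y) ^ r = (y + x) ^ r := by ring_nf
      _ ≤ 2 ^ r * (y ^ r + x ^ r) := this
      _ = 2 ^ r * (x ^ r + y ^ r) := by ring

lemma grow_mono {r R : ℝ} (hr : 0 ≤ r) (hrR : r ≤ R) (t : ℝ) :
    1 + |t| ^ r ≤ 2 * (1 + |t| ^ R) := by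
  have h : |t| ^ r ≤ 1 + |t| ^ R := by
    rcases le_total (|t|) 1 with h1 | h1
    · have := Real.rpow_le_one (abs_nonneg t) h1 hr
      have : (0:ℝ) ≤ |t| ^ R := Real.rpow_nonneg (abs_nonneg t) R
      linarith [Real.rpow_le_one (abs_nonneg t) h1 hr]
    · have := Real.rpow_le_rpow_of_exponent_le h1 hrR
      linarith
  have : (0:ℝ) ≤ |t| ^ R := Real.rpow_nonneg (abs_nonneg t) R
  linarith

lemma integrableOn_exp_mul_Iic' {d : ℝ} (hd : 0 < d) (t : ℝ) :
    IntegrableOn (fun τ => Real.exp (d * τ)) (Iic t) := by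
  refine integrableOn_Iic_of_intervalIntegral_norm_bounded (Real.exp (d * t) / d) t
    (fun y => ((Real.continuous_exp.comp (continuous_const.mul continuous_id)).integrableOn_Ioc)) Filter.tendsto_id
    (Filter.Eventually.of_forall fun y => ?_)
  have hcont : Continuous fun τ : ℝ => Real.exp (d * τ) :=
    Real.continuous_exp.comp (continuous_const.mul continuous_id)
  show (∫ x in y..t, ‖Real.exp (d * x)‖) ≤ _
  have : ∫ x in y..t, ‖Real.exp (d * x)‖ = ∫ x in y..t, Real.exp (d * x) := by
    simp [Real.norm_eq_abs, abs_of_pos (Real.exp_pos _)]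
  rw [this]
  have hval : ∫ x in y..t, Real.exp (d * x) = (Real.exp (d * t) - Real.exp (d * y)) / d := by
    have : ∀ x ∈ Set.uIcc y t, HasDerivAt (fun z => Real.exp (d * z) / d) (Real.exp (d * x)) x := by
      intro x _
      have : HasDerivAt (fun z : ℝ => d * z) d x := by
        simpa using (hasDerivAt_id x).const_mul d
      have := (this.exp).div_const d
      simpa [mul_comm, mul_div_assoc, mul_div_cancel_left₀ _ hd.ne'] using this
    have := intervalIntegral.integral_eq_sub_of_hasDerivAt this
      (hcont.intervalIntegrable y t)
    rw [this]; ring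
  rw [hval]
  have h := Real.exp_pos (d * y)
  exact (div_le_div_iff_of_pos_right hd).mpr (by linarith)

lemma integral_exp_mul_Iic' {d : ℝ} (hd : 0 < d) (t : ℝ) :
    ∫ τ in Iic t, Real.exp (d * τ) = Real.exp (d * t) / d := by
  have hint := integrableOn_exp_mul_Iic' hd t
  refine tendsto_nhds_unique
    (intervalIntegral_tendsto_integral_Iic _ hint Filter.tendsto_id) ?_
  have hval : ∀ y : ℝ, ∫ x in y..t, Real.exp (d * x) = (Real.exp (d * t) - Real.exp (d * y)) / d := by
    intro y
    have hder : ∀ x ∈ Set.uIcc y t, HasDerivAt (fun z => Real.exp (d * z) / d) (Real.exp (d * x)) x := by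
      intro x _
      have h1 : HasDerivAt (fun z : ℝ => d * z) d x := by
        simpa using (hasDerivAt_id x).const_mul d
      have := (h1.exp).div_const d
      simpa [mul_comm, mul_div_assoc, mul_div_cancel_left₀ _ hd.ne'] using this
    have hcont : Continuous fun τ : ℝ => Real.exp (d * τ) :=
      Real.continuous_exp.comp (continuous_const.mul continuous_id)
    rw [intervalIntegral.integral_eq_sub_of_hasDerivAt hder (hcont.intervalIntegrable y t)]
    ring
  simp only [hval]
  have h1 : Filter.Tendsto (fun y : ℝ => Real.exp (d * y)) Filter.atBot (nhds 0) := by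
    apply Real.tendsto_exp_atBot.comp
    exact (Filter.tendsto_id (α := ℝ)).const_mul_atBot hd
  have h2 : Filter.Tendsto (fun y : ℝ => (Real.exp (d * t) - Real.exp (d * y)) / d)
      Filter.atBot (nhds ((Real.exp (d * t) - 0) / d)) :=
    (tendsto_const_nhds.sub h1).div_const d
  simpa using h2

lemma norm_cexp_mul_ofReal (μ : ℂ) (x : ℝ) : ‖Complex.exp (μ * (x : ℂ))‖ = Real.exp (μ.re * x) := by
  rw [Complex.norm_exp]
  congr 1
  simp [Complex.mul_re]

lemma core_bound (μ : ℂ) (hν : μ.re < 0) (v : ℝ → ℂ) (hv : Continuous v) {C r : ℝ}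
    (hC : 0 < C) (hr : 0 ≤ r) (hvb : ∀ τ : ℝ, ‖v τ‖ ≤ C * (1 + |τ| ^ r)) :
    (∀ t : ℝ, IntegrableOn (fun τ : ℝ => Complex.exp (μ * ((t : ℂ) - (τ : ℂ))) * v τ) (Iic t)) ∧
    ∃ C' : ℝ, 0 < C' ∧ ∀ t : ℝ,
      ‖∫ τ in Iic t, Complex.exp (μ * ((t : ℂ) - (τ : ℂ))) * v τ‖ ≤ C' * (1 + |t| ^ r) := by
  set ν := μ.re with hνdef
  have hdpos : (0:ℝ) < -ν := by linarith
  obtain ⟨K, hK, hKs⟩ := exp_bound_K (b := (-ν)/2) (by linarith) hr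
  have h2r : (0:ℝ) < 2 ^ r := Real.rpow_pos_of_pos two_pos r
  set B : ℝ := C * 2 ^ r * K with hBdef
  have hBpos : 0 < B := by positivity
  set M : ℝ → ℝ → ℝ := fun t τ =>
    (C * (1 + 2 ^ r * |t| ^ r)) * Real.exp (ν * (t - τ)) + B * Real.exp ((ν/2) * (t - τ)) with hMdef
  have hnorm : ∀ t τ : ℝ, ‖Complex.exp (μ * ((t:ℂ) - (τ:ℂ))) * v τ‖
      = Real.exp (ν * (t - τ)) * ‖v τ‖ := by
    intro t τ
    rw [norm_mul]
    congr 1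
    have h : ((t:ℂ) - (τ:ℂ)) = ((t - τ : ℝ) : ℂ) := by push_cast; ring
    rw [h, norm_cexp_mul_ofReal]
  have hpt : ∀ t τ : ℝ, τ ≤ t → Real.exp (ν * (t - τ)) * ‖v τ‖ ≤ M t τ := by
    intro t τ hτ
    set s := t - τ with hsdef
    have hs : 0 ≤ s := by simp [hsdef]; linarith
    have hexp : (0:ℝ) < Real.exp (ν * s) := Real.exp_pos _
    have e1 : |τ| ^ r ≤ 2 ^ r * (|t| ^ r + s ^ r) := by
      have habs : |τ| ≤ |t| + s := by
        have : τ = t - s := by simp [hsdef]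
        rw [this]
        calc |t - s| ≤ |t| + |s| := abs_sub _ _
          _ = |t| + s := by rw [abs_of_nonneg hs]
      calc |τ| ^ r ≤ (|t| + s) ^ r := Real.rpow_le_rpow (abs_nonneg _) habs hr
        _ ≤ 2 ^ r * (|t| ^ r + s ^ r) := rpow_add_le' (abs_nonneg _) hs hr
    have e2 : s ^ r * Real.exp (ν * s) ≤ K * Real.exp ((ν/2) * s) := by
      have h1 := hKs s hs
      have h2 : Real.exp ((-ν)/2 * s) * Real.exp (ν * s) = Real.exp ((ν/2) * s) := by
        rw [← Real.exp_add]; congr 1; ring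
      calc s ^ r * Real.exp (ν * s) ≤ (K * Real.exp ((-ν)/2 * s)) * Real.exp (ν * s) := by
            exact mul_le_mul_of_nonneg_right h1 hexp.le
        _ = K * (Real.exp ((-ν)/2 * s) * Real.exp (ν * s)) := by ring
        _ = K * Real.exp ((ν/2) * s) := by rw [h2]
    have hvτ := hvb τ
    have hsr : (0:ℝ) ≤ s ^ r := Real.rpow_nonneg hs r
    have htr : (0:ℝ) ≤ |t| ^ r := Real.rpow_nonneg (abs_nonneg t) r
    calc Real.exp (ν * s) * ‖v τ‖ ≤ Real.exp (ν * s) * (C * (1 + |τ| ^ r)) := by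
          exact mul_le_mul_of_nonneg_left hvτ hexp.le
      _ ≤ Real.exp (ν * s) * (C * (1 + 2 ^ r * (|t| ^ r + s ^ r))) := by
          apply mul_le_mul_of_nonneg_left _ hexp.le
          nlinarith
      _ = (C * (1 + 2 ^ r * |t| ^ r)) * Real.exp (ν * s) + C * 2 ^ r * (s ^ r * Real.exp (ν * s)) := by
          ring
      _ ≤ (C * (1 + 2 ^ r * |t| ^ r)) * Real.exp (ν * s) + C * 2 ^ r * (K * Real.exp ((ν/2) * s)) := by
          nlinarith
      _ = M t τ := by simp only [hMdef, hBdef, hsdef]; ring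
  have heq1 : ∀ t : ℝ, (fun τ => Real.exp (ν * t) * Real.exp ((-ν) * τ)) = fun τ => Real.exp (ν * (t - τ)) := by
    intro t; funext τ; rw [← Real.exp_add]; congr 1; ring
  have heq2 : ∀ t : ℝ, (fun τ => Real.exp ((ν/2) * t) * Real.exp ((-ν)/2 * τ)) = fun τ => Real.exp ((ν/2) * (t - τ)) := by
    intro t; funext τ; rw [← Real.exp_add]; congr 1; ring
  have hM1 : ∀ t : ℝ, IntegrableOn (fun τ => Real.exp (ν * (t - τ))) (Iic t) := by
    intro t
    rw [← heq1 t]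
    exact (integrableOn_exp_mul_Iic' hdpos t).const_mul _
  have hM2 : ∀ t : ℝ, IntegrableOn (fun τ => Real.exp ((ν/2) * (t - τ))) (Iic t) := by
    intro t
    rw [← heq2 t]
    exact (integrableOn_exp_mul_Iic' (by linarith) t).const_mul _
  have hMint : ∀ t : ℝ, IntegrableOn (M t) (Iic t) := by
    intro t
    exact ((hM1 t).const_mul _).add ((hM2 t).const_mul _)
  have hmeas : ∀ t : ℝ, Continuous (fun τ : ℝ => Complex.exp (μ * ((t:ℂ) - (τ:ℂ))) * v τ) := by
    intro t
    exact (Complex.continuous_exp.comp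
      (continuous_const.mul (continuous_const.sub Complex.continuous_ofReal))).mul hv
  have hptM : ∀ t : ℝ, ∀ᵐ (τ : ℝ) ∂(volume.restrict (Iic t)),
      ‖Complex.exp (μ * ((t:ℂ) - (τ:ℂ))) * v τ‖ ≤ M t τ := by
    intro t
    filter_upwards [ae_restrict_mem measurableSet_Iic] with τ hτ
    rw [hnorm]
    exact hpt t τ hτ
  have hint : ∀ t : ℝ, IntegrableOn (fun τ : ℝ => Complex.exp (μ * ((t:ℂ) - (τ:ℂ))) * v τ) (Iic t) := by
    intro t
    exact Integrable.mono' (hMint t) (hmeas t).aestronglyMeasurable (hptM t)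
  refine ⟨hint, (C * (1 + 2 ^ r)) / (-ν) + 2 * B / (-ν), by positivity, fun t => ?_⟩
  have hI1 : ∫ τ in Iic t, Real.exp (ν * (t - τ)) = 1 / (-ν) := by
    rw [← heq1 t, MeasureTheory.integral_const_mul, integral_exp_mul_Iic' hdpos t,
      ← mul_div_assoc, ← Real.exp_add]
    rw [show ν * t + -ν * t = 0 by ring, Real.exp_zero]
  have hI2 : ∫ τ in Iic t, Real.exp ((ν/2) * (t - τ)) = 2 / (-ν) := by
    rw [← heq2 t, MeasureTheory.integral_const_mul, integral_exp_mul_Iic' (by linarith : (0:ℝ) < (-ν)/2) t,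
      ← mul_div_assoc, ← Real.exp_add]
    rw [show ν / 2 * t + -ν / 2 * t = 0 by ring, Real.exp_zero]
    rw [div_div_eq_mul_div]
    ring
  have hMI : ∫ τ in Iic t, M t τ
      = (C * (1 + 2 ^ r * |t| ^ r)) * (1 / (-ν)) + B * (2 / (-ν)) := by
    rw [hMdef]
    rw [MeasureTheory.integral_add ((hM1 t).const_mul _) ((hM2 t).const_mul _),
      MeasureTheory.integral_const_mul, MeasureTheory.integral_const_mul, hI1, hI2]
  have hb1 : ‖∫ τ in Iic t, Complex.exp (μ * ((t:ℂ) - (τ:ℂ))) * v τ‖ ≤ ∫ τ in Iic t, M t τ :=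
    norm_integral_le_of_norm_le (hMint t) (hptM t)
  rw [hMI] at hb1
  have htr : (0:ℝ) ≤ |t| ^ r := Real.rpow_nonneg (abs_nonneg t) r
  have hinv : (0:ℝ) < 1 / (-ν) := by positivity
  refine hb1.trans ?_
  have hrw : (C * (1 + 2 ^ r)) / (-ν) + 2 * B / (-ν)
      = (C * (1 + 2 ^ r)) * (1/(-ν)) + 2 * B * (1/(-ν)) := by ring
  rw [hrw]
  have h2 : B * (2 / (-ν)) = 2 * B * (1/(-ν)) := by ring
  rw [h2]
  nlinarith [mul_nonneg (mul_nonneg hC.le hinv.le) htr,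
    mul_nonneg (mul_nonneg hBpos.le hinv.le) htr,
    mul_nonneg (mul_nonneg (mul_nonneg hC.le h2r.le) hinv.le) htr,
    mul_pos hC hinv, mul_pos h2r hinv, mul_pos hBpos hinv, mul_pos (mul_pos hC h2r) hinv]

lemma masterNeg (μ : ℂ) (hν : μ.re < 0) (u : ℝ → ℂ) (hu : ContDiff ℝ (⊤ : ℕ∞) u)
    (hgrow : ∀ k : ℕ, ∃ C r : ℝ, 0 < C ∧ 0 < r ∧
      ∀ t : ℝ, ‖iteratedDeriv k u t‖ ≤ C * (1 + |t| ^ r)) :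
    ContDiff ℝ (⊤ : ℕ∞) (fun t : ℝ => ∫ τ in Iic t, Complex.exp (μ * ((t:ℂ) - (τ:ℂ))) * u τ) ∧
    (∀ k : ℕ, ∃ C r : ℝ, 0 < C ∧ 0 < r ∧ ∀ t : ℝ,
      ‖iteratedDeriv k (fun t : ℝ => ∫ τ in Iic t, Complex.exp (μ * ((t:ℂ) - (τ:ℂ))) * u τ) t‖
        ≤ C * (1 + |t| ^ r)) ∧
    (∀ (n : ℕ) (C : ℝ), 0 < C → (∀ t : ℝ, ‖u t‖ ≤ C * (1 + |t| ^ n)) →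
      ∃ C' : ℝ, 0 < C' ∧ ∀ t : ℝ,
        ‖∫ τ in Iic t, Complex.exp (μ * ((t:ℂ) - (τ:ℂ))) * u τ‖ ≤ C' * (1 + |t| ^ n)) := by
  have hucont : Continuous u := hu.continuous
  set F : ℝ → ℂ := fun t : ℝ => ∫ τ in Iic t, Complex.exp (μ * ((t:ℂ) - (τ:ℂ))) * u τ with hFdef
  obtain ⟨C₀, r₀, hC₀, hr₀, hb₀⟩ := hgrow 0
  have hb₀' : ∀ t : ℝ, ‖u t‖ ≤ C₀ * (1 + |t| ^ r₀) := by
    intro t; have := hb₀ t; rwa [iteratedDeriv_zero] at this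
  have hcore := core_bound μ hν u hucont hC₀ hr₀.le hb₀'
  set g : ℝ → ℂ := fun τ : ℝ => Complex.exp (-(μ * τ)) * u τ with hgdef
  have hglue : ∀ t : ℝ, (fun τ : ℝ => Complex.exp (μ * ((t:ℂ) - (τ:ℂ))) * u τ)
      = fun τ : ℝ => Complex.exp (μ * t) * g τ := by
    intro t; funext τ
    show _ = Complex.exp (μ * t) * (Complex.exp (-(μ * τ)) * u τ)
    rw [← mul_assoc, ← Complex.exp_add]
    congr 2
    ring
  have hgc : Continuous g :=
    (Complex.continuous_exp.comp (continuous_const.mul Complex.continuous_ofReal).neg).mul hucont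
  have hgint : ∀ t : ℝ, IntegrableOn g (Iic t) := by
    intro t
    have h := hcore.1 t
    rw [hglue t] at h
    have h2 := h.const_mul (Complex.exp (μ * t))⁻¹
    have : (fun τ : ℝ => (Complex.exp (μ * t))⁻¹ * (Complex.exp (μ * t) * g τ)) = g := by
      funext τ
      rw [← mul_assoc, inv_mul_cancel₀ (Complex.exp_ne_zero _), one_mul]
    rwa [this] at h2
  set In : ℝ → ℂ := fun s : ℝ => ∫ τ in Iic s, g τ with hIndef
  have hIeq : ∀ s : ℝ, In s = In 0 + ∫ τ in (0:ℝ)..s, g τ := by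
    intro s
    rw [← intervalIntegral.integral_Iic_sub_Iic (hgint 0) (hgint s)]
    show In s = In 0 + (In s - In 0)
    ring
  have hInd : ∀ t : ℝ, HasDerivAt In (g t) t := by
    intro t
    have hii : IntervalIntegrable g volume 0 t := by
      rw [intervalIntegrable_iff]
      exact (hgint (0 ⊔ t)).mono_set Set.Ioc_subset_Iic_self
    have hd := intervalIntegral.integral_hasDerivAt_right hii
      (hgc.stronglyMeasurableAtFilter _ _) hgc.continuousAt
    have h2 := hd.const_add (In 0)
    have hfun : (fun s => In 0 + ∫ τ in (0:ℝ)..s, g τ) = In := funext fun s => (hIeq s).symm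
    rwa [hfun] at h2
  have hexp : ∀ t : ℝ, HasDerivAt (fun s : ℝ => Complex.exp (μ * s)) (μ * Complex.exp (μ * t)) t := by
    intro t
    have h1 : HasDerivAt (fun s : ℝ => (s:ℂ)) 1 t := by
      simpa using HasDerivAt.ofReal_comp (hasDerivAt_id t)
    have h2 := (h1.const_mul μ).cexp
    simpa [mul_comm] using h2
  have hFeq : F = fun t : ℝ => Complex.exp (μ * t) * In t := by
    funext t
    show (∫ τ in Iic t, Complex.exp (μ * ((t:ℂ) - (τ:ℂ))) * u τ) = _
    rw [hglue t, MeasureTheory.integral_const_mul]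
  have hFd : ∀ t : ℝ, HasDerivAt F (μ * F t + u t) t := by
    intro t
    have h := (hexp t).mul (hInd t)
    have hgu : Complex.exp (μ * t) * g t = u t := by
      show Complex.exp (μ * t) * (Complex.exp (-(μ * t)) * u t) = u t
      rw [← mul_assoc, ← Complex.exp_add]
      simp
    rw [hFeq]
    refine h.congr_deriv ?_
    symm
    rw [← hgu]
    show μ * (Complex.exp (μ * ↑t) * In t) + _ = _
    ring
  -- analyticity
  have hofReal : ∀ n : WithTop ℕ∞, ContDiff ℝ n (fun t : ℝ => (t:ℂ)) :=
    fun n => Complex.ofRealCLM.contDiff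
  have hgsmooth : ContDiff ℝ (⊤ : ℕ∞) g :=
    ((ContDiff.neg (contDiff_const.mul (hofReal _))).cexp).mul hu
  have hInsmooth : ContDiff ℝ (⊤ : ℕ∞) In := by
    rw [contDiff_infty_iff_deriv]
    refine ⟨fun x => (hInd x).differentiableAt, ?_⟩
    have hdIn : deriv In = g := funext fun t => (hInd t).deriv
    rw [hdIn]; exact hgsmooth
  have hFsmooth : ContDiff ℝ (⊤ : ℕ∞) F := by
    rw [hFeq]; exact ((contDiff_const.mul (hofReal _)).cexp).mul hInsmooth
  have hder : deriv F = fun t => μ * F t + u t := funext fun t => (hFd t).deriv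
  refine ⟨hFsmooth, ?_, ?_⟩
  · intro k
    induction k with
    | zero =>
      obtain ⟨C', hC', hb'⟩ := hcore.2
      exact ⟨C', r₀, hC', hr₀, fun t => by
        rw [iteratedDeriv_zero]; exact hb' t⟩
    | succ k ih =>
      obtain ⟨C, r, hC, hr, hb⟩ := ih
      obtain ⟨C₂, r₂, hC₂, hr₂, hb₂⟩ := hgrow k
      refine ⟨2 * (‖μ‖ * C + C₂) + 1, max r r₂, by positivity, lt_max_of_lt_left hr, fun t => ?_⟩
      have e1 : iteratedDeriv (k+1) F t = μ * iteratedDeriv k F t + iteratedDeriv k u t := by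
        rw [iteratedDeriv_succ', hder]
        have hF' : ContDiffOn ℝ k F univ := (hFsmooth.of_le (by exact_mod_cast le_top)).contDiffOn
        have hu' : ContDiffOn ℝ k u univ := (hu.of_le (by exact_mod_cast le_top)).contDiffOn
        rw [← iteratedDerivWithin_univ]
        rw [show (fun s => μ * F s + u s) = ((fun s => μ * F s) + u) from rfl]
        rw [iteratedDerivWithin_add (mem_univ t) uniqueDiffOn_univ
          ((contDiffOn_const.mul hF') t (mem_univ t)) (hu' t (mem_univ t))]
        rw [show (fun s => μ * F s) = (μ • F) from rfl]
        rw [iteratedDerivWithin_const_smul (mem_univ t) uniqueDiffOn_univ μ (hF' t (mem_univ t))]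
        rw [iteratedDerivWithin_univ, iteratedDerivWithin_univ]
        simp [smul_eq_mul]
      rw [e1]
      have h1 := hb t
      have h2 := hb₂ t
      have h3 := grow_mono hr.le (le_max_left r r₂) t
      have h4 := grow_mono hr₂.le (le_max_right r r₂) t
      have h5 : ‖μ * iteratedDeriv k F t + iteratedDeriv k u t‖
          ≤ ‖μ‖ * ‖iteratedDeriv k F t‖ + ‖iteratedDeriv k u t‖ := by
        calc ‖μ * iteratedDeriv k F t + iteratedDeriv k u t‖
            ≤ ‖μ * iteratedDeriv k F t‖ + ‖iteratedDeriv k u t‖ := norm_add_le _ _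
          _ = ‖μ‖ * ‖iteratedDeriv k F t‖ + ‖iteratedDeriv k u t‖ := by rw [norm_mul]
      have hμ0 : (0:ℝ) ≤ ‖μ‖ := norm_nonneg μ
      have h6 : (0:ℝ) ≤ 1 + |t| ^ max r r₂ := by positivity
      calc ‖μ * iteratedDeriv k F t + iteratedDeriv k u t‖
          ≤ ‖μ‖ * ‖iteratedDeriv k F t‖ + ‖iteratedDeriv k u t‖ := h5
        _ ≤ ‖μ‖ * (C * (1 + |t| ^ r)) + C₂ * (1 + |t| ^ r₂) :=
            add_le_add (mul_le_mul_of_nonneg_left h1 hμ0) h2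
        _ ≤ ‖μ‖ * (C * (2 * (1 + |t| ^ max r r₂))) + C₂ * (2 * (1 + |t| ^ max r r₂)) :=
            add_le_add (mul_le_mul_of_nonneg_left
              (mul_le_mul_of_nonneg_left h3 hC.le) hμ0) (mul_le_mul_of_nonneg_left h4 hC₂.le)
        _ = (2 * (‖μ‖ * C + C₂)) * (1 + |t| ^ max r r₂) := by ring
        _ ≤ (2 * (‖μ‖ * C + C₂) + 1) * (1 + |t| ^ max r r₂) := by nlinarith [h6]
  · intro n C hC hbn
    have hbn' : ∀ t : ℝ, ‖u t‖ ≤ C * (1 + |t| ^ ((n:ℝ))) := by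
      intro t; rw [Real.rpow_natCast]; exact hbn t
    obtain ⟨C', hC', hb'⟩ := (core_bound μ hν u hucont hC (by positivity) hbn').2
    exact ⟨C', hC', fun t => by
      have := hb' t; rwa [Real.rpow_natCast] at this⟩

end ExpConvAux

open Set


/-- Let `μ̃ ≥ 0` and `μ ∈ ℂ` with `|Re μ| > μ̃`. If `u : ℝ → ℂ` is smooth
and `u` and all its derivatives grow at most polynomially, then `e^{μ(·)} ⋆ u` is smooth and
it and all its derivatives grow at most polynomially; moreover if `|u(t)| ≤ C(1 + |t|^n)`
for all `t`, then there is `C' > 0` with `|(e^{μ(·)} ⋆ u)(t)| ≤ C'(1 + |t|^n)` for all `t`. -/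
theorem expConv_polynomial_growth
    (μt : ℝ) (hμt : 0 ≤ μt) (μ : ℂ) (hμ : μt < |μ.re|)
    (u : ℝ → ℂ) (hu : ContDiff ℝ (⊤ : ℕ∞) u)
    (hgrow : ∀ k : ℕ, ∃ C r : ℝ, 0 < C ∧ 0 < r ∧
      ∀ t : ℝ, ‖iteratedDeriv k u t‖ ≤ C * (1 + |t| ^ r)) :
    ContDiff ℝ (⊤ : ℕ∞) (expConv μ u) ∧
      (∀ k : ℕ, ∃ C r : ℝ, 0 < C ∧ 0 < r ∧
        ∀ t : ℝ, ‖iteratedDeriv k (expConv μ u) t‖ ≤ C * (1 + |t| ^ r)) ∧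
      (∀ (n : ℕ) (C : ℝ), 0 < C → (∀ t : ℝ, ‖u t‖ ≤ C * (1 + |t| ^ n)) →
        ∃ C' : ℝ, 0 < C' ∧ ∀ t : ℝ, ‖expConv μ u t‖ ≤ C' * (1 + |t| ^ n)) := by
  rcases lt_trichotomy μ.re 0 with hneg | h0 | hpos
  · -- negative real part
    have hEq : expConv μ u
        = fun t : ℝ => ∫ τ in Iic t, Complex.exp (μ * ((t:ℂ) - (τ:ℂ))) * u τ := by
      funext t
      simp only [expConv, if_pos hneg]
    obtain ⟨h1, h2, h3⟩ := masterNeg μ hneg u hu hgrow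
    rw [hEq]
    exact ⟨h1, h2, h3⟩
  · exfalso
    rw [h0] at hμ
    simp at hμ
    linarith
  · -- positive real part
    set v : ℝ → ℂ := fun τ => u (-τ) with hvdef
    have hv : ContDiff ℝ (⊤ : ℕ∞) v := hu.comp contDiff_neg
    have hμ' : (-μ).re < 0 := by simpa using hpos
    have hvgrow : ∀ k : ℕ, ∃ C r : ℝ, 0 < C ∧ 0 < r ∧
        ∀ t : ℝ, ‖iteratedDeriv k v t‖ ≤ C * (1 + |t| ^ r) := by
      intro k
      obtain ⟨C, r, hC, hr, hb⟩ := hgrow k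
      refine ⟨C, r, hC, hr, fun t => ?_⟩
      have hid : iteratedDeriv k v t = (-1 : ℝ) ^ k • iteratedDeriv k u (-t) :=
        iteratedDeriv_comp_neg k u t
      rw [hid, norm_smul]
      have h1 : ‖(-1 : ℝ) ^ k‖ = 1 := by
        rw [norm_pow]; simp
      rw [h1, one_mul]
      have := hb (-t)
      rwa [abs_neg] at this
    obtain ⟨h1, h2, h3⟩ := masterNeg (-μ) hμ' v hv hvgrow
    set G : ℝ → ℂ := fun t : ℝ => ∫ τ in Iic t, Complex.exp ((-μ) * ((t:ℂ) - (τ:ℂ))) * v τ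
      with hGdef
    have hEq : expConv μ u = fun t : ℝ => G (-t) := by
      funext t
      simp only [expConv, if_neg (not_lt.2 hpos.le)]
      have hcv := integral_comp_neg_Iic (-t)
        (fun τ : ℝ => Complex.exp (μ * ((t:ℂ) - (τ:ℂ))) * u τ)
      rw [neg_neg] at hcv
      rw [MeasureTheory.integral_Ici_eq_integral_Ioi, ← hcv]
      show _ = G (-t)
      rw [hGdef]
      apply MeasureTheory.setIntegral_congr_fun measurableSet_Iic
      intro τ _
      symm
      show Complex.exp ((-μ) * (((-t : ℝ):ℂ) - (τ:ℂ))) * v τ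
          = Complex.exp (μ * ((t:ℂ) - ((-τ : ℝ):ℂ))) * u (-τ)
      congr 2
      push_cast
      ring
    rw [hEq]
    refine ⟨h1.comp contDiff_neg, ?_, ?_⟩
    · intro k
      obtain ⟨C, r, hC, hr, hb⟩ := h2 k
      refine ⟨C, r, hC, hr, fun t => ?_⟩
      have hid : iteratedDeriv k (fun t : ℝ => G (-t)) t = (-1 : ℝ) ^ k • iteratedDeriv k G (-t) :=
        iteratedDeriv_comp_neg k G t
      rw [hid, norm_smul]
      have hone : ‖(-1 : ℝ) ^ k‖ = 1 := by rw [norm_pow]; simp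
      rw [hone, one_mul]
      have := hb (-t)
      rwa [abs_neg] at this
    · intro n C hC hbn
      have hbn' : ∀ t : ℝ, ‖v t‖ ≤ C * (1 + |t| ^ n) := by
        intro t
        show ‖u (-t)‖ ≤ _
        have := hbn (-t)
        rwa [abs_neg] at this
      obtain ⟨C', hC', hb'⟩ := h3 n C hC hbn'
      exact ⟨C', hC', fun t => by
        have := hb' (-t)
        rwa [abs_neg] at this⟩
end

section
/- Let V be a Hilbert space over ℂ (or ℝ), let W ⊆ V be a linear subspace, let I ⊆ ℝ be an interval containing 0, and let g be a map from I × V into the space of linear operators from W to V. Let X : I → W be a map that is differentiable as a map into V and satisfies X′(t) = g(t, X(t))(X(t)) for all t ∈ I. Let ζ ∈ ℝ be such that g(t,w) + ζ is negative semidefinite for all t ∈ I and w ∈ V, i.e., Re⟨g(t,w)v, v⟩ + ζ‖v‖² ≤ 0 for all v ∈ W. Then for all t ∈ I with t ≥ 0, ‖X(t)‖_V ≤ ‖X(0)‖_V · e^{−ζt}. -/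
/-! The energy `‖X t‖² e^{2ζt}` has derivative `2 e^{2ζt} (Re⟨X', X⟩ + ζ‖X‖²) ≤ 0` along the
solution, so it is antitone on the interval `I`; taking square roots gives the bound. -/

open RCLike Real
open scoped InnerProductSpace

section

variable {𝕜 V : Type*} [RCLike 𝕜] [NormedAddCommGroup V] [InnerProductSpace 𝕜 V]
  [NormedSpace ℝ V]

theorem HasDerivWithinAt.norm_sq_rclike {f : ℝ → V} {f' : V} {s : Set ℝ} {x : ℝ}
    (hf : HasDerivWithinAt f f' s x) :
    HasDerivWithinAt (‖f ·‖ ^ 2) (2 * re ⟪f', f x⟫_𝕜) s x := by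
  have hre := (reCLM (K := 𝕜)).hasFDerivAt.comp_hasDerivWithinAt x (hf.inner 𝕜 hf)
  simp only [Function.comp_def, reCLM_apply, map_add, inner_self_eq_norm_sq] at hre
  rwa [inner_re_symm, ← two_mul] at hre

variable {f : ℝ → V} {I : Set ℝ} {ζ : ℝ}

theorem antitoneOn_norm_sq_mul_exp_of_re_inner_deriv_le (hI : I.OrdConnected)
    (hf : ∀ t ∈ I, ∃ f', HasDerivWithinAt f f' I t ∧ re ⟪f', f t⟫_𝕜 ≤ -ζ * ‖f t‖ ^ 2) :
    AntitoneOn (fun t => ‖f t‖ ^ 2 * exp (2 * ζ * t)) I := by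
  choose! F hF hdiss using hf
  have hderiv : ∀ t ∈ I, HasDerivWithinAt (fun t => ‖f t‖ ^ 2 * exp (2 * ζ * t))
      (2 * exp (2 * ζ * t) * (re ⟪F t, f t⟫_𝕜 + ζ * ‖f t‖ ^ 2)) I t := by
    intro t ht
    have hexp : HasDerivWithinAt (fun t => exp (2 * ζ * t)) (exp (2 * ζ * t) * (2 * ζ)) I t := by
      simpa using ((hasDerivAt_id t).const_mul (2 * ζ)).exp.hasDerivWithinAt
    exact ((HasDerivWithinAt.norm_sq_rclike (𝕜 := 𝕜) (hF t ht)).mul hexp).congr_deriv (by ring)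
  refine antitoneOn_of_hasDerivWithinAt_nonpos hI.convex
    (fun t ht => (hderiv t ht).continuousWithinAt)
    (fun t ht => (hderiv t (interior_subset ht)).mono interior_subset) fun t ht => ?_
  exact mul_nonpos_of_nonneg_of_nonpos (by positivity)
    (by linarith [hdiss t (interior_subset ht)])

theorem norm_le_mul_exp_of_re_inner_deriv_le (hI : I.OrdConnected)
    (hf : ∀ t ∈ I, ∃ f', HasDerivWithinAt f f' I t ∧ re ⟪f', f t⟫_𝕜 ≤ -ζ * ‖f t‖ ^ 2)
    {a b : ℝ} (ha : a ∈ I) (hb : b ∈ I) (hab : a ≤ b) :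
    ‖f b‖ ≤ ‖f a‖ * exp (-ζ * (b - a)) := by
  have hsq : (‖f b‖ * exp (ζ * b)) ^ 2 ≤ (‖f a‖ * exp (ζ * a)) ^ 2 := by
    simpa only [mul_pow, ← exp_nat_mul, Nat.cast_ofNat, ← mul_assoc] using
      antitoneOn_norm_sq_mul_exp_of_re_inner_deriv_le hI hf ha hb hab
  have hle := le_of_pow_le_pow_left₀ two_ne_zero (by positivity) hsq
  rwa [← le_div_iff₀ (exp_pos _), mul_div_assoc, ← exp_sub, ← mul_sub, ← neg_sub,
    mul_neg, ← neg_mul] at hle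

end

theorem norm_le_of_negative_semidefinite_general
    {𝕜 V : Type*} [RCLike 𝕜] [NormedAddCommGroup V] [InnerProductSpace 𝕜 V]
    [NormedSpace ℝ V]
    (W : Submodule 𝕜 V) (I : Set ℝ) (hI : I.OrdConnected) (h0 : (0 : ℝ) ∈ I)
    (g : ℝ → V → (W →ₗ[𝕜] V)) (X : ℝ → V)
    (hXW : ∀ t ∈ I, X t ∈ W)
    (hX : ∀ t, ∀ ht : t ∈ I, HasDerivWithinAt X (g t (X t) ⟨X t, hXW t ht⟩) I t)
    (ζ : ℝ)
    (hζ : ∀ t ∈ I, ∀ v : V, ∀ w : W,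
      RCLike.re (inner 𝕜 (g t v w) (w : V) : 𝕜) + ζ * ‖(w : V)‖ ^ 2 ≤ 0) :
    ∀ t ∈ I, 0 ≤ t → ‖X t‖ ≤ ‖X 0‖ * Real.exp (-ζ * t) := by
  intro t ht ht0
  have hdiss : ∀ s ∈ I, ∃ X', HasDerivWithinAt X X' I s ∧
      re ⟪X', X s⟫_𝕜 ≤ -ζ * ‖X s‖ ^ 2 := fun s hs =>
    ⟨_, hX s hs, by linarith [hζ s hs (X s) ⟨X s, hXW s hs⟩]⟩
  simpa using norm_le_mul_exp_of_re_inner_deriv_le hI hdiss h0 ht ht0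

/-- Let `V` be a Hilbert space, `W ⊆ V` a linear subspace, `I ⊆ ℝ` an
interval containing `0`, and `g : I × V → (linear operators W → V)`. Let `X : I → W` be
differentiable (into `V`) with `X′(t) = g(t, X(t))(X(t))` on `I`. If `ζ ∈ ℝ` is such that
`g(t,w) + ζ` is negative semidefinite for all `t ∈ I`, `w ∈ V` (i.e.
`Re⟨g(t,w)v, v⟩ + ζ‖v‖² ≤ 0` for all `v ∈ W`), then `‖X(t)‖ ≤ ‖X(0)‖ e^{−ζ t}` for all
`t ∈ I` with `t ≥ 0`. -/
theorem norm_le_of_negative_semidefinite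
    {𝕜 V : Type*} [RCLike 𝕜] [NormedAddCommGroup V] [InnerProductSpace 𝕜 V]
    [NormedSpace ℝ V] [IsScalarTower ℝ 𝕜 V]
    (W : Submodule 𝕜 V) (I : Set ℝ) (hI : I.OrdConnected) (h0 : (0 : ℝ) ∈ I)
    (g : ℝ → V → (W →ₗ[𝕜] V)) (X : ℝ → V)
    (hXW : ∀ t ∈ I, X t ∈ W)
    (hX : ∀ t, ∀ ht : t ∈ I, HasDerivWithinAt X (g t (X t) ⟨X t, hXW t ht⟩) I t)
    (ζ : ℝ)
    (hζ : ∀ t ∈ I, ∀ v : V, ∀ w : W,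
      RCLike.re (inner 𝕜 (g t v w) (w : V) : 𝕜) + ζ * ‖(w : V)‖ ^ 2 ≤ 0) :
    ∀ t ∈ I, 0 ≤ t → ‖X t‖ ≤ ‖X 0‖ * Real.exp (-ζ * t) :=
  norm_le_of_negative_semidefinite_general W I hI h0 g X hXW hX ζ hζ
end

section
/- Let p ∈ ℕ with p ≥ 2, and let α, β, γ, μ̃ be real numbers with 0 ≤ α < μ̃ < min(β, γ), β − (p+1)α > μ̃, and γ − (p+1)α > μ̃. Let (α_j)_{j∈ℕ} be a sequence of complex numbers such that every j ∈ ℕ satisfies at least one of: |Re(α_j)| ≤ α (j is central), Re(α_j) ≤ −β (j is stable), Re(α_j) ≥ γ (j is unstable). Let q : ℕ → ℕ₀ be a finitely supported function with ∑_j q_j = p, and define μ^q_j := (∑_{k∈ℕ} q_k α_k) − α_j. Say 'q^s = 0' if q_k = 0 for every stable k, and 'q^u = 0' if q_k = 0 for every unstable k (and 'q^s ≠ 0', 'q^u ≠ 0' for the respective negations). Suppose j ∈ ℕ satisfies one of the following: (i) j is central and either (q^s = 0 and q^u ≠ 0) or (q^u = 0 and q^s ≠ 0); (ii) j is stable and q^s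 = 0; (iii) j is unstable and q^u = 0. Then |Re(μ^q_j)| > μ̃. -/
/-- Spectral-gap estimate: with `0 ≤ α < μ̃ < min(β,γ)`,
`β − (p+1)α > μ̃`, `γ − (p+1)α > μ̃`, eigenvalues `α_j` each central (`|Re α_j| ≤ α`),
stable (`Re α_j ≤ −β`) or unstable (`Re α_j ≥ γ`), and a finitely supported multi-index `q`
with `|q| = p ≥ 2`, set `μ^q_j := (∑_k q_k α_k) − α_j`. If `j` satisfies (i) `j` central and
exactly one of `q^s = 0`, `q^u = 0`; (ii) `j` stable and `q^s = 0`; or (iii) `j` unstable and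
`q^u = 0`, then `|Re μ^q_j| > μ̃`. -/
theorem re_muqj_gt
    (p : ℕ) (hp : 2 ≤ p) (α β γ μt : ℝ)
    (hα : 0 ≤ α) (hαμ : α < μt) (hμβ : μt < min β γ)
    (hβ : μt < β - (p + 1) * α) (hγ : μt < γ - (p + 1) * α)
    (a : ℕ → ℂ)
    (hcover : ∀ j : ℕ, |(a j).re| ≤ α ∨ (a j).re ≤ -β ∨ γ ≤ (a j).re)
    (q : ℕ →₀ ℕ) (hq : (∑ k ∈ q.support, q k) = p)
    (j : ℕ)
    (hj :
      (|(a j).re| ≤ α ∧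
        (((∀ k, (a k).re ≤ -β → q k = 0) ∧ ¬(∀ k, γ ≤ (a k).re → q k = 0)) ∨
         ((∀ k, γ ≤ (a k).re → q k = 0) ∧ ¬(∀ k, (a k).re ≤ -β → q k = 0)))) ∨
      ((a j).re ≤ -β ∧ (∀ k, (a k).re ≤ -β → q k = 0)) ∨
      (γ ≤ (a j).re ∧ (∀ k, γ ≤ (a k).re → q k = 0))) :
    μt < |((∑ k ∈ q.support, (q k : ℂ) * a k) - a j).re| := by
  have hαβ : α < β := hαμ.trans (hμβ.trans_le (min_le_left _ _))
  have hαγ : α < γ := hαμ.trans (hμβ.trans_le (min_le_right _ _))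
  have hre : ((∑ k ∈ q.support, (q k : ℂ) * a k)).re
      = ∑ k ∈ q.support, (q k : ℝ) * (a k).re := by
    rw [Complex.re_sum]
    exact Finset.sum_congr rfl fun k _ => by simp [Complex.mul_re]
  rw [Complex.sub_re, hre]
  set S := ∑ k ∈ q.support, (q k : ℝ) * (a k).re with hSdef
  have hsum : (∑ k ∈ q.support, ((q k : ℝ))) = p := by exact_mod_cast hq
  -- pointwise bounds on support
  have hub1 : ∀ (h : ∀ k, γ ≤ (a k).re → q k = 0), ∀ k ∈ q.support, (a k).re ≤ α := by
    intro h k hk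
    have hk0 : q k ≠ 0 := Finsupp.mem_support_iff.mp hk
    rcases hcover k with h1 | h2 | h3
    · exact (abs_le.mp h1).2
    · linarith
    · exact absurd (h k h3) hk0
  have hlb1 : ∀ (h : ∀ k, (a k).re ≤ -β → q k = 0), ∀ k ∈ q.support, -α ≤ (a k).re := by
    intro h k hk
    have hk0 : q k ≠ 0 := Finsupp.mem_support_iff.mp hk
    rcases hcover k with h1 | h2 | h3
    · exact (abs_le.mp h1).1
    · exact absurd (h k h2) hk0
    · linarith
  -- basic sum bounds
  have hub : (∀ k, γ ≤ (a k).re → q k = 0) → S ≤ p * α := by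
    intro h
    calc S ≤ ∑ k ∈ q.support, (q k : ℝ) * α :=
          Finset.sum_le_sum fun k hk =>
            mul_le_mul_of_nonneg_left (hub1 h k hk) (by positivity)
      _ = p * α := by rw [← Finset.sum_mul, hsum]
  have hlb : (∀ k, (a k).re ≤ -β → q k = 0) → -(p * α) ≤ S := by
    intro h
    calc (-(p * α) : ℝ) = ∑ k ∈ q.support, (q k : ℝ) * (-α) := by
          rw [← Finset.sum_mul, hsum]; ring
      _ ≤ S := Finset.sum_le_sum fun k hk =>
          mul_le_mul_of_nonneg_left (hlb1 h k hk) (by positivity)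
  -- stronger bound when q^u = 0 but some stable k0 is present
  have hub' : (∀ k, γ ≤ (a k).re → q k = 0) →
      ∀ k0, (a k0).re ≤ -β → q k0 ≠ 0 → S ≤ p * α - (α + β) := by
    intro h k0 hk0β hk0
    have hk0mem : k0 ∈ q.support := Finsupp.mem_support_iff.mpr hk0
    have hT : α + β ≤ ∑ k ∈ q.support, (q k : ℝ) * (α - (a k).re) := by
      have h1 : (q k0 : ℝ) * (α - (a k0).re) ≤ ∑ k ∈ q.support, (q k : ℝ) * (α - (a k).re) :=
        Finset.single_le_sum (f := fun k => (q k : ℝ) * (α - (a k).re))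
          (fun k hk => mul_nonneg (by positivity) (by linarith [hub1 h k hk])) hk0mem
      have hq1 : (1 : ℝ) ≤ (q k0 : ℝ) := by exact_mod_cast Nat.one_le_iff_ne_zero.mpr hk0
      nlinarith [hk0β, hαβ]
    have hTS : ∑ k ∈ q.support, (q k : ℝ) * (α - (a k).re) = p * α - S := by
      simp only [mul_sub]
      rw [Finset.sum_sub_distrib, ← Finset.sum_mul, hsum]
    linarith
  -- stronger bound when q^s = 0 but some unstable k0 is present
  have hlb' : (∀ k, (a k).re ≤ -β → q k = 0) →
      ∀ k0, γ ≤ (a k0).re → q k0 ≠ 0 → γ + α - p * α ≤ S := by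
    intro h k0 hk0γ hk0
    have hk0mem : k0 ∈ q.support := Finsupp.mem_support_iff.mpr hk0
    have hT : γ + α ≤ ∑ k ∈ q.support, (q k : ℝ) * ((a k).re + α) := by
      have h1 : (q k0 : ℝ) * ((a k0).re + α) ≤ ∑ k ∈ q.support, (q k : ℝ) * ((a k).re + α) :=
        Finset.single_le_sum (f := fun k => (q k : ℝ) * ((a k).re + α))
          (fun k hk => mul_nonneg (by positivity) (by linarith [hlb1 h k hk])) hk0mem
      have hq1 : (1 : ℝ) ≤ (q k0 : ℝ) := by exact_mod_cast Nat.one_le_iff_ne_zero.mpr hk0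
      nlinarith [hk0γ, hαγ]
    have hTS : ∑ k ∈ q.support, (q k : ℝ) * ((a k).re + α) = S + p * α := by
      simp only [mul_add]
      rw [Finset.sum_add_distrib, ← Finset.sum_mul, hsum]
    linarith
  have hp1 : (1 : ℝ) ≤ (p : ℝ) := by exact_mod_cast Nat.one_le_of_lt hp
  rcases hj with ⟨hjc, hcase⟩ | ⟨hjs, hqs⟩ | ⟨hju, hqu⟩
  · have hjc1 := abs_le.mp hjc
    rcases hcase with ⟨hqs, hqune⟩ | ⟨hqu, hqsne⟩
    · push_neg at hqune
      obtain ⟨k0, hk0γ, hk0⟩ := hqune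
      have := hlb' hqs k0 hk0γ hk0
      rw [lt_abs]; left; linarith
    · push_neg at hqsne
      obtain ⟨k0, hk0β, hk0⟩ := hqsne
      have := hub' hqu k0 hk0β hk0
      rw [lt_abs]; right; linarith
  · have := hlb hqs
    rw [lt_abs]; left; linarith
  · have := hub hqu
    rw [lt_abs]; right; linarith
end

section
/- Let V be a separable Hilbert space over ℂ with a Hilbert basis (orthonormal set with dense span) {e_j}_{j∈ℕ}, let W be a separable Banach space, and let {f_k}_{k∈ℕ} ⊂ W be a countable subset with dense span. Let n ∈ ℕ, n ≥ 1. For α ∈ ℕ^n and k ∈ ℕ, let e^α ⊗ f_k ∈ B^n(V,W) be the continuous n-multilinear map (v₁, …, vₙ) ↦ (∏_{i=1}^n ⟨e_{α_i}, v_i⟩)·f_k. Then each e^α ⊗ f_k lies in K^n(V,W), and the linear span of {e^α ⊗ f_k : α ∈ ℕ^n, k ∈ ℕ} is dense in K^n(V,W) with respect to the multilinear operator norm of B^n(V,W). -/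
/-- The elementary `n`-multilinear map `e^α ⊗ f_k : (v₁,…,vₙ) ↦ (∏ i ⟨e_{α i}, v_i⟩) • f_k`. -/
noncomputable def elemMultilinear {V W : Type*}
    [NormedAddCommGroup V] [InnerProductSpace ℂ V]
    [NormedAddCommGroup W] [NormedSpace ℂ W]
    (n : ℕ) (e : ℕ → V) (f : ℕ → W) (α : Fin n → ℕ) (k : ℕ) :
    ContinuousMultilinearMap ℂ (fun _ : Fin n => V) W :=
  (ContinuousMultilinearMap.mkPiRing ℂ (Fin n) (f k)).compContinuousLinearMap
    (fun i => innerSL ℂ (e (α i)))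

/-! The proof is an induction on `n` through the currying `λ ↦ (v ↦ λ(v, ·, …, ·))`, an
isometry from `B^{n+1}(V,W)` onto `B(V, B^n(V,W))`. For `λ ∈ K^{n+1}` the curried map `T` is a
compact operator into `B^n(V,W)`, and a compact operator on a Hilbert space is the norm limit of
its truncations `∑_{j<N} ⟨e_j, ·⟩ T e_j`: vectors `u_N` of norm at most one orthogonal to
`e_0, …, e_{N-1}` form a weakly null sequence, and a compact operator maps bounded weakly null
sequences to norm null ones. Each `⟨e_j, ·⟩ T e_j` with `T e_j ∈ K^n` is then approximated, by
induction, through the maps `⟨e_j, ·⟩ (e^α ⊗ f_k) = e^{(j, α)} ⊗ f_k`. -/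

open Filter Topology

section CompactOperator

variable {𝕜 V W : Type*} [RCLike 𝕜] [NormedAddCommGroup V] [NormedAddCommGroup W]
  [NormedSpace 𝕜 W]

theorem IsCompactOperator.tendsto_zero_of_weakly_null [NormedSpace 𝕜 V] {T : V →L[𝕜] W}
    (hT : IsCompactOperator T) {u : ℕ → V} {r : ℝ} (hu : ∀ N, ‖u N‖ ≤ r)
    (hweak : ∀ φ : StrongDual 𝕜 V, Tendsto (fun N => φ (u N)) atTop (𝓝 0)) :
    Tendsto (fun N => T (u N)) atTop (𝓝 0) := by
  refine tendsto_of_subseq_tendsto fun ns hns => ?_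
  have hmem : ∀ N, T (u (ns N)) ∈ closure (T '' Metric.closedBall 0 r) := fun N =>
    subset_closure ⟨u (ns N), mem_closedBall_zero_iff.mpr (hu _), rfl⟩
  obtain ⟨w, -, φ, hφ, hconv⟩ := (hT.isCompact_closure_image_closedBall r).tendsto_subseq hmem
  suffices hw : w = 0 from ⟨φ, hw ▸ hconv⟩
  refine SeparatingDual.eq_zero_of_forall_dual_eq_zero (R := 𝕜) fun ψ => ?_
  refine tendsto_nhds_unique ((ψ.continuous.tendsto w).comp hconv) ?_
  exact (hweak (ψ ∘L T)).comp (hns.comp hφ.tendsto_atTop)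

variable [InnerProductSpace 𝕜 V]

theorem Orthonormal.starProjection_span_image_range [DecidableEq V] {e : ℕ → V}
    (he : Orthonormal 𝕜 e) (N : ℕ) (x : V) :
    (Submodule.span 𝕜 ((Finset.range N).image e : Set V)).starProjection x
      = ∑ j ∈ Finset.range N, inner 𝕜 (e j) x • e j := by
  rw [(OrthonormalBasis.span he (Finset.range N)).starProjection_eq_sum_rankOne]
  simp only [OrthonormalBasis.span_apply, sum_apply, InnerProductSpace.rankOne_apply]
  exact Finset.sum_coe_sort (Finset.range N) (fun j => inner 𝕜 (e j) x • e j)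

variable [CompleteSpace V]

theorem IsCompactOperator.tendsto_comp_starProjection {T : V →L[𝕜] W}
    (hT : IsCompactOperator T) (U : ℕ → Submodule 𝕜 V) [∀ N, (U N).HasOrthogonalProjection]
    (hU : Monotone U) (hdense : ⊤ ≤ (⨆ N, U N).topologicalClosure) :
    Tendsto (fun N => T ∘L (U N).starProjection) atTop (𝓝 T) := by
  have hQ : ∀ z, Tendsto (fun N => ‖(U N)ᗮ.starProjection z‖) atTop (𝓝 0) := fun z => by
    simpa [Submodule.starProjection_orthogonal] using
      ((tendsto_const_nhds (x := z)).sub (Submodule.starProjection_tendsto_self U hU z hdense)).norm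
  have hnorm : ∀ N, ‖T ∘L (U N).starProjection - T‖ = ‖T ∘L (U N)ᗮ.starProjection‖ := by
    intro N
    rw [← norm_neg, neg_sub, Submodule.starProjection_orthogonal, ContinuousLinearMap.comp_sub,
      ContinuousLinearMap.comp_id]
  have hnear : ∀ N : ℕ, ∃ x : V, ‖x‖ < 1 ∧
      ‖T ∘L (U N)ᗮ.starProjection‖ < ‖T ((U N)ᗮ.starProjection x)‖ + 1 / (N + 1) := fun N => by
    simpa only [← sub_lt_iff_lt_add, ContinuousLinearMap.comp_apply] using
      (T ∘L (U N)ᗮ.starProjection).exists_lt_apply_of_lt_opNorm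
        (sub_lt_self _ Nat.one_div_pos_of_nat)
  choose x hx1 hx using hnear
  have hweak : ∀ φ : StrongDual 𝕜 V,
      Tendsto (fun N => φ ((U N)ᗮ.starProjection (x N))) atTop (𝓝 0) := by
    intro φ
    have hbound : ∀ N, ‖φ ((U N)ᗮ.starProjection (x N))‖
        ≤ ‖(U N)ᗮ.starProjection ((InnerProductSpace.toDual 𝕜 V).symm φ)‖ := fun N => by
      rw [← InnerProductSpace.toDual_symm_apply, ← Submodule.inner_starProjection_left_eq_right]
      exact (norm_inner_le_norm _ _).trans (mul_le_of_le_one_right (norm_nonneg _) (hx1 N).le)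
    exact squeeze_zero_norm hbound (hQ _)
  have hTQx := hT.tendsto_zero_of_weakly_null
    (fun N => ((U N)ᗮ.norm_starProjection_apply_le (x N)).trans (hx1 N).le) hweak
  rw [tendsto_iff_norm_sub_tendsto_zero]
  simp only [hnorm]
  refine squeeze_zero (fun N => norm_nonneg _) (fun N => (hx N).le) ?_
  simpa only [norm_zero, add_zero] using hTQx.norm.add tendsto_one_div_add_atTop_nhds_zero_nat

theorem IsCompactOperator.tendsto_sum_smulRight {T : V →L[𝕜] W} (hT : IsCompactOperator T)
    {e : ℕ → V} (he : Orthonormal 𝕜 e)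
    (hdense : Dense (Submodule.span 𝕜 (Set.range e) : Set V)) :
    Tendsto (fun N => ∑ j ∈ Finset.range N, (innerSL 𝕜 (e j)).smulRight (T (e j))) atTop
      (𝓝 T) := by
  classical
  set U : ℕ → Submodule 𝕜 V := fun N => Submodule.span 𝕜 ((Finset.range N).image e : Set V)
  have hU : Monotone U := fun M N hMN => Submodule.span_mono
    (Finset.coe_subset.mpr (Finset.image_subset_image (Finset.range_mono hMN)))
  have hspan : Submodule.span 𝕜 (Set.range e) ≤ ⨆ N, U N := by
    rw [Submodule.span_le]
    rintro _ ⟨j, rfl⟩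
    exact Submodule.mem_iSup_of_mem (j + 1) (Submodule.subset_span
      (Finset.mem_coe.mpr (Finset.mem_image_of_mem e (Finset.self_mem_range_succ j))))
  have hdense' : ⊤ ≤ (⨆ N, U N).topologicalClosure := by
    rw [← (Submodule.dense_iff_topologicalClosure_eq_top.mp hdense)]
    exact Submodule.topologicalClosure_mono hspan
  convert hT.tendsto_comp_starProjection U hU hdense' using 2 with N
  ext x
  simp only [U, ContinuousLinearMap.comp_apply, he.starProjection_span_image_range, map_sum,
    map_smul, sum_apply, ContinuousLinearMap.smulRight_apply, innerSL_apply_apply]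

end CompactOperator

section KMultilinear

variable {𝕜 V W : Type*} [RCLike 𝕜] [NormedAddCommGroup V] [NormedSpace 𝕜 V]
  [NormedAddCommGroup W] [NormedSpace 𝕜 W]

theorem continuousMultilinearCurryFin0_curryLeft
    (g : ContinuousMultilinearMap 𝕜 (fun _ : Fin 1 => V) W) (v : V) :
    continuousMultilinearCurryFin0 𝕜 V W (g.curryLeft v) = g fun _ => v := by
  simp only [continuousMultilinearCurryFin0_apply, ContinuousMultilinearMap.curryLeft_apply]
  congr 1
  funext i
  rw [Fin.fin_one_eq_zero i, Fin.cons_zero]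

theorem mem_KMultilinear_succ_iff {n : ℕ}
    {g : ContinuousMultilinearMap 𝕜 (fun _ : Fin (n + 1) => V) W} :
    g ∈ KMultilinear 𝕜 V W (n + 1) ↔ ∃ hg : ∀ v, g.curryLeft v ∈ KMultilinear 𝕜 V W n,
      IsCompactOperator fun v => (⟨g.curryLeft v, hg v⟩ : KMultilinear 𝕜 V W n) := by
  cases n with
  | succ n => rfl
  | zero =>
    let E := continuousMultilinearCurryFin0 𝕜 V W
    have hcomp : (fun v : V => g fun _ => v) = fun v => E (g.curryLeft v) :=
      funext fun v => (continuousMultilinearCurryFin0_curryLeft g v).symm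
    refine ⟨fun hg => ⟨fun _ => trivial, ?_⟩, fun ⟨_, hg⟩ => ?_⟩
    · change IsCompactOperator fun v : V => g fun _ => v at hg
      rw [hcomp] at hg
      have := hg.continuous_comp
        (E.symm.continuous.subtype_mk (p := (· ∈ KMultilinear 𝕜 V W 0)) fun _ => trivial)
      simpa [Function.comp_def] using this
    · show IsCompactOperator fun v : V => g fun _ => v
      rw [hcomp]
      exact hg.continuous_comp (E.continuous.comp continuous_subtype_val)

theorem KMultilinear.isCompactOperator_curryLeft {n : ℕ}
    {g : ContinuousMultilinearMap 𝕜 (fun _ : Fin (n + 1) => V) W}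
    (hg : g ∈ KMultilinear 𝕜 V W (n + 1)) : IsCompactOperator fun v => g.curryLeft v := by
  obtain ⟨_, hc⟩ := mem_KMultilinear_succ_iff.mp hg
  exact hc.continuous_comp continuous_subtype_val

theorem KMultilinear.smul_mem {n : ℕ} (c : 𝕜)
    {g : ContinuousMultilinearMap 𝕜 (fun _ : Fin n => V) W} (hg : g ∈ KMultilinear 𝕜 V W n) :
    c • g ∈ KMultilinear 𝕜 V W n := by
  induction n with
  | zero => trivial
  | succ n ih =>
    obtain ⟨hmem, hc⟩ := mem_KMultilinear_succ_iff.mp hg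
    refine mem_KMultilinear_succ_iff.mpr ⟨fun v => ih (hmem v), ?_⟩
    exact hc.continuous_comp (g := fun x : KMultilinear 𝕜 V W n =>
      (⟨c • x.1, ih x.2⟩ : KMultilinear 𝕜 V W n)) (by fun_prop)

theorem KMultilinear.mem_succ_of_curryLeft_eq_smulRight {n : ℕ}
    {g : ContinuousMultilinearMap 𝕜 (fun _ : Fin (n + 1) => V) W}
    {m : ContinuousMultilinearMap 𝕜 (fun _ : Fin n => V) W} (hm : m ∈ KMultilinear 𝕜 V W n)
    (u : StrongDual 𝕜 V) (hg : g.curryLeft = u.smulRight m) :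
    g ∈ KMultilinear 𝕜 V W (n + 1) := by
  have hcurry : ∀ v, g.curryLeft v = u v • m := fun v => by rw [hg]; rfl
  refine mem_KMultilinear_succ_iff.mpr ⟨fun v => hcurry v ▸ smul_mem _ hm, ?_⟩
  have := (isCompactOperator_of_locallyCompactSpace_dom u).continuous_comp
    ((continuous_id.smul continuous_const).subtype_mk fun c : 𝕜 => smul_mem c hm)
  simpa [Function.comp_def, hcurry] using this

end KMultilinear

theorem Submodule.apply_mem_topologicalClosure_of_map_le {M N : Type*}
    [NormedAddCommGroup M] [NormedSpace ℂ M] [NormedAddCommGroup N] [NormedSpace ℂ N]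
    (L : M →L[ℂ] N) {s : Submodule ℂ M} {t : Submodule ℂ N} (h : s.map (L : M →ₗ[ℂ] N) ≤ t)
    {x : M} (hx : x ∈ s.topologicalClosure) : L x ∈ t.topologicalClosure :=
  Submodule.topologicalClosure_mono h (Submodule.topologicalClosure_map L s ⟨x, hx, rfl⟩)

section elemMultilinear

variable {V W : Type*} [NormedAddCommGroup V] [InnerProductSpace ℂ V]
  [NormedAddCommGroup W] [NormedSpace ℂ W]

theorem elemMultilinear_succ_curryLeft (n : ℕ) (e : ℕ → V) (f : ℕ → W) (α : Fin (n + 1) → ℕ)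
    (k : ℕ) : (elemMultilinear (n + 1) e f α k).curryLeft
      = (innerSL ℂ (e (α 0))).smulRight (elemMultilinear n e f (Fin.tail α) k) := by
  ext v m
  simp [elemMultilinear, Fin.prod_univ_succ, Fin.tail, smul_smul]

theorem elemMultilinear_mem_KMultilinear (n : ℕ) (e : ℕ → V) (f : ℕ → W) (α : Fin n → ℕ)
    (k : ℕ) : elemMultilinear n e f α k ∈ KMultilinear ℂ V W n := by
  induction n with
  | zero => trivial
  | succ n ih =>
    exact KMultilinear.mem_succ_of_curryLeft_eq_smulRight (ih (Fin.tail α)) _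
      (elemMultilinear_succ_curryLeft n e f α k)

def elemMultilinearSpan (n : ℕ) (e : ℕ → V) (f : ℕ → W) :
    Submodule ℂ (ContinuousMultilinearMap ℂ (fun _ : Fin n => V) W) :=
  Submodule.span ℂ (Set.range fun p : (Fin n → ℕ) × ℕ => elemMultilinear n e f p.1 p.2)

theorem elemMultilinearSpan_zero_dense (e : ℕ → V) {f : ℕ → W}
    (hf : Dense (Submodule.span ℂ (Set.range f) : Set W)) :
    (elemMultilinearSpan 0 e f).topologicalClosure = ⊤ := by
  let E := continuousMultilinearCurryFin0 ℂ V W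
  let L := E.symm.toContinuousLinearEquiv.toContinuousLinearMap
  have hgen : (Submodule.span ℂ (Set.range f)).map (L : W →ₗ[ℂ] _)
      ≤ elemMultilinearSpan 0 e f := by
    rw [Submodule.map_span_le]
    rintro _ ⟨k, rfl⟩
    refine Submodule.subset_span ⟨(Fin.elim0, k), ?_⟩
    ext m
    simp [L, E, elemMultilinear]
  refine eq_top_iff.mpr fun g _ => E.symm_apply_apply g ▸ ?_
  refine Submodule.apply_mem_topologicalClosure_of_map_le L hgen ?_
  rw [← SetLike.mem_coe, Submodule.topologicalClosure_coe, hf.closure_eq]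
  trivial

theorem curryLeft_symm_smulRight_mem_topologicalClosure {n : ℕ} (e : ℕ → V) (f : ℕ → W)
    (j : ℕ)     {m : ContinuousMultilinearMap ℂ (fun _ : Fin n => V) W}
    (hm : m ∈ (elemMultilinearSpan n e f).topologicalClosure) :
    (continuousMultilinearCurryLeftEquiv ℂ (fun _ : Fin (n + 1) => V) W).symm
      ((innerSL ℂ (e j)).smulRight m) ∈ (elemMultilinearSpan (n + 1) e f).topologicalClosure := by
  let E := continuousMultilinearCurryLeftEquiv ℂ (fun _ : Fin (n + 1) => V) W
  let L := E.symm.toContinuousLinearEquiv.toContinuousLinearMap ∘L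
    ContinuousLinearMap.smulRightL ℂ V _ (innerSL ℂ (e j))
  have hgen : (elemMultilinearSpan n e f).map (L : _ →ₗ[ℂ] _)
      ≤ elemMultilinearSpan (n + 1) e f := by
    rw [elemMultilinearSpan, Submodule.map_span_le]
    rintro _ ⟨⟨α, k⟩, rfl⟩
    refine Submodule.subset_span ⟨(Fin.cons j α, k), ?_⟩
    show _ = E.symm ((innerSL ℂ (e j)).smulRight (elemMultilinear n e f α k))
    rw [eq_comm, LinearIsometryEquiv.symm_apply_eq]
    exact (elemMultilinear_succ_curryLeft n e f (Fin.cons j α) k).symm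
  exact Submodule.apply_mem_topologicalClosure_of_map_le L hgen hm

theorem KMultilinear_subset_topologicalClosure_elemMultilinearSpan [CompleteSpace V]
    {e : ℕ → V} (he : Orthonormal ℂ e)
    (hespan : Dense (Submodule.span ℂ (Set.range e) : Set V)) {f : ℕ → W}
    (hfspan : Dense (Submodule.span ℂ (Set.range f) : Set W)) (n : ℕ) :
    KMultilinear ℂ V W n ⊆ (elemMultilinearSpan n e f).topologicalClosure := by
  induction n with
  | zero => simp [elemMultilinearSpan_zero_dense e hfspan]
  | succ n ih =>
    intro g hg
    let E := continuousMultilinearCurryLeftEquiv ℂ (fun _ : Fin (n + 1) => V) W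
    have hlim := (E.symm.continuous.tendsto _).comp
      ((KMultilinear.isCompactOperator_curryLeft hg).tendsto_sum_smulRight he hespan)
    rw [Function.comp_def, show E.symm g.curryLeft = g from E.symm_apply_apply g] at hlim
    refine (Submodule.isClosed_topologicalClosure _).mem_of_tendsto hlim
      (Eventually.of_forall fun N => ?_)
    rw [← LinearIsometryEquiv.coe_toLinearEquiv, map_sum]
    exact Submodule.sum_mem _ fun j _ => curryLeft_symm_smulRight_mem_topologicalClosure e f j
      (ih ((mem_KMultilinear_succ_iff.mp hg).1 (e j)))

end elemMultilinear

theorem span_elemMultilinear_dense_in_KMultilinear_general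
    {V W : Type*}
    [NormedAddCommGroup V] [InnerProductSpace ℂ V] [CompleteSpace V]
    [NormedAddCommGroup W] [NormedSpace ℂ W]
    (n : ℕ)
    (e : ℕ → V) (he : Orthonormal ℂ e)
    (hespan : Dense (↑(Submodule.span ℂ (Set.range e)) : Set V))
    (f : ℕ → W)
    (hfspan : Dense (↑(Submodule.span ℂ (Set.range f)) : Set W)) :
    (∀ (α : Fin n → ℕ) (k : ℕ), elemMultilinear n e f α k ∈ KMultilinear ℂ V W n) ∧
      ∀ g ∈ KMultilinear ℂ V W n,
        g ∈ closure (↑(Submodule.span ℂ (Set.range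
          fun p : (Fin n → ℕ) × ℕ => elemMultilinear n e f p.1 p.2)) :
          Set (ContinuousMultilinearMap ℂ (fun _ : Fin n => V) W)) :=
  ⟨elemMultilinear_mem_KMultilinear n e f,
    KMultilinear_subset_topologicalClosure_elemMultilinearSpan he hespan hfspan n⟩

/-- Let `V` be a separable complex Hilbert space with a Hilbert basis
`{e_j}`, `W` a separable Banach space and `{f_k} ⊆ W` a countable subset with dense span,
and `n ≥ 1`. Then each `e^α ⊗ f_k` lies in `K^n(V,W)`, and the span of
`{e^α ⊗ f_k : α ∈ ℕ^n, k ∈ ℕ}` is dense in `K^n(V,W)` for the multilinear operator norm. -/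
theorem span_elemMultilinear_dense_in_KMultilinear
    {V W : Type*}
    [NormedAddCommGroup V] [InnerProductSpace ℂ V] [CompleteSpace V]
    [TopologicalSpace.SeparableSpace V]
    [NormedAddCommGroup W] [NormedSpace ℂ W] [CompleteSpace W]
    [TopologicalSpace.SeparableSpace W]
    (n : ℕ) (hn : 1 ≤ n)
    (e : ℕ → V) (he : Orthonormal ℂ e)
    (hespan : Dense (↑(Submodule.span ℂ (Set.range e)) : Set V))
    (f : ℕ → W)
    (hfspan : Dense (↑(Submodule.span ℂ (Set.range f)) : Set W)) :
    (∀ (α : Fin n → ℕ) (k : ℕ), elemMultilinear n e f α k ∈ KMultilinear ℂ V W n) ∧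
      ∀ g ∈ KMultilinear ℂ V W n,
        g ∈ closure (↑(Submodule.span ℂ (Set.range
          fun p : (Fin n → ℕ) × ℕ => elemMultilinear n e f p.1 p.2)) :
          Set (ContinuousMultilinearMap ℂ (fun _ : Fin n => V) W)) :=
  span_elemMultilinear_dense_in_KMultilinear_general n e he hespan f hfspan
end
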